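/- arXiv:2412.17914 — 3 statements merged into one kernel-verified Lean document; each statement's English description precedes it below -/
import Mathlib

section
/- Given a crossed module of Lie algebras μ: h → g, the 2-cochain c((h,g),(h',g')) = (0, μ([h,h'])) on the semi-direct product h⋊g (h viewed as abelian g-module) is a 2-cocycle with adjoint values. -/
/-
The `h`-component of the cocycle identity is minus the cyclic sum of `⁅μ ⁅b, c⁆, a⁆ = ⁅⁅b, c⁆, a⁆`,
which vanishes by the Jacobi identity in `h`. In the `g`-component, equivariance of `μ` turns
`⁅p, μ ⁅b, c⁆⁆` into `μ ⁅p, ⁅b, c⁆⁆`, and expanding `⁅p, ⁅b, c⁆⁆` by the derivation rule matches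
the cyclic sum of `⁅⁅p, b⁆ - ⁅q, a⁆, c⁆` term by term.
-/

section

variable {h g : Type*} [LieRing h] [LieAlgebra ℂ h] [LieRing g] [LieAlgebra ℂ g]
  [LieRingModule g h] [LieModule ℂ g h]

/-- The bracket of the semi-direct product `h ⋊ g` (`h` viewed as abelian `g`-module). -/
def semidirectBracket (x y : h × g) : h × g :=
  (⁅x.2, y.1⁆ - ⁅y.2, x.1⁆, ⁅x.2, y.2⁆)

/-- The 2-cochain `c((h,g),(h',g')) = (0, μ([h,h']))` attached to `μ : h → g`. -/
def crossedCocycle (μ : h →ₗ⁅ℂ⁆ g) (x y : h × g) : h × g :=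
  (0, μ ⁅x.1, y.1⁆)

theorem lie_lie_add_lie_lie_add_lie_lie {L : Type*} [LieRing L] (a b c : L) :
    ⁅⁅b, c⁆, a⁆ + ⁅⁅c, a⁆, b⁆ + ⁅⁅a, b⁆, c⁆ = 0 := by
  rw [← lie_skew ⁅b, c⁆ a, ← lie_skew ⁅c, a⁆ b, ← lie_skew ⁅a, b⁆ c, ← neg_add, ← neg_add,
    lie_jacobi, neg_zero]

theorem cyclic_sum_lie_lie_of_derivation {L M : Type*} [LieRing L] [LieRing M] [LieRingModule L M]
    (hder : ∀ (x : L) (a b : M), ⁅x, ⁅a, b⁆⁆ = ⁅⁅x, a⁆, b⁆ + ⁅a, ⁅x, b⁆⁆)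
    (a b c : M) (p q r : L) :
    ⁅⁅p, b⁆ - ⁅q, a⁆, c⁆ + ⁅⁅q, c⁆ - ⁅r, b⁆, a⁆ + ⁅⁅r, a⁆ - ⁅p, c⁆, b⁆ =
      ⁅p, ⁅b, c⁆⁆ + ⁅q, ⁅c, a⁆⁆ + ⁅r, ⁅a, b⁆⁆ := by
  rw [hder, hder, hder, ← lie_skew c ⁅q, a⁆, ← lie_skew a ⁅r, b⁆, ← lie_skew b ⁅p, c⁆]
  simp only [sub_lie]
  abel

/-- for a crossed module `μ : h → g`, the cochain
`c((h,g),(h',g')) = (0, μ[h,h'])` is a 2-cocycle on `h ⋊ g` with adjoint values. -/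
theorem crossedCocycle_is_two_cocycle (μ : h →ₗ⁅ℂ⁆ g)
    (hder : ∀ (x : g) (a b : h), ⁅x, ⁅a, b⁆⁆ = ⁅⁅x, a⁆, b⁆ + ⁅a, ⁅x, b⁆⁆)
    (hcm1 : ∀ (x : g) (a : h), μ ⁅x, a⁆ = ⁅x, μ a⁆)
    (hcm2 : ∀ a b : h, ⁅μ a, b⁆ = ⁅a, b⁆) :
    ∀ x y z : h × g,
      crossedCocycle μ (semidirectBracket x y) z +
          crossedCocycle μ (semidirectBracket y z) x +
          crossedCocycle μ (semidirectBracket z x) y =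
        semidirectBracket x (crossedCocycle μ y z) +
          semidirectBracket y (crossedCocycle μ z x) +
          semidirectBracket z (crossedCocycle μ x y) := by
  rintro ⟨a, p⟩ ⟨b, q⟩ ⟨c, r⟩
  simp only [crossedCocycle, semidirectBracket, Prod.mk_add_mk, Prod.mk.injEq]
  constructor
  · simp only [lie_zero, zero_sub, hcm2]
    rw [← neg_add, ← neg_add, lie_lie_add_lie_lie_add_lie_lie, neg_zero, add_zero, add_zero]
  · simp only [← hcm1, ← map_add]
    rw [cyclic_sum_lie_lie_of_derivation hder]

end
end

section
/- If μ: h → g is a crossed module of Lie algebras with μ([h,h]) ≠ 0, then the 2-cocycle c((h,g),(h',g')) = (0, μ([h,h'])) on h⋊g is not a coboundary; in particular H^2(h⋊g, h⋊g) ≠ 0. -/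
section

variable {h g : Type*} [LieRing h] [LieRing g] [LieRingModule g h]

theorem semidirectBracket_inl_inl (a b : h) :
    semidirectBracket ((a, 0) : h × g) (b, 0) = 0 := by
  simp [semidirectBracket]

theorem semidirectBracket_inl_left_snd (a : h) (y : h × g) :
    (semidirectBracket ((a, 0) : h × g) y).2 = 0 :=
  zero_lie y.2

end

section

variable {h g : Type*} [LieRing h] [LieAlgebra ℂ h] [LieRing g] [LieAlgebra ℂ g]
  [LieRingModule g h] [LieModule ℂ g h]

theorem crossedCocycle_not_coboundary_general (μ : h →ₗ⁅ℂ⁆ g)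
    (hne : ∃ a b : h, μ ⁅a, b⁆ ≠ 0) :
    ¬ ∃ α : (h × g) →ₗ[ℂ] (h × g), ∀ x y : h × g,
      crossedCocycle μ x y =
        semidirectBracket x (α y) - semidirectBracket y (α x) - α (semidirectBracket x y) := by
  rintro ⟨α, hα⟩
  obtain ⟨a, b, hab⟩ := hne
  have key := congrArg Prod.snd (hα (a, 0) (b, 0))
  simp only [crossedCocycle, semidirectBracket_inl_inl, map_zero, Prod.snd_sub,
    semidirectBracket_inl_left_snd, Prod.snd_zero, sub_self] at key
  exact hab key

/-- if `μ : h → g` is a crossed module with `μ([h,h]) ≠ 0`, the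
2-cocycle `c` is not a coboundary; in particular `H²(h ⋊ g, h ⋊ g) ≠ 0`. -/
theorem crossedCocycle_not_coboundary (μ : h →ₗ⁅ℂ⁆ g)
    (hder : ∀ (x : g) (a b : h), ⁅x, ⁅a, b⁆⁆ = ⁅⁅x, a⁆, b⁆ + ⁅a, ⁅x, b⁆⁆)
    (hcm1 : ∀ (x : g) (a : h), μ ⁅x, a⁆ = ⁅x, μ a⁆)
    (hcm2 : ∀ a b : h, ⁅μ a, b⁆ = ⁅a, b⁆)
    (hne : ∃ a b : h, μ ⁅a, b⁆ ≠ 0) :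
    ¬ ∃ α : (h × g) →ₗ[ℂ] (h × g), ∀ x y : h × g,
      crossedCocycle μ x y =
        semidirectBracket x (α y) - semidirectBracket y (α x) - α (semidirectBracket x y) :=
  crossedCocycle_not_coboundary_general μ hne

end
end

section
/- If the map μ in a crossed module μ: h → g is an isomorphism of Lie algebras, then the deformed Lie algebra (h⊕g, [·,·]_t) with bracket [(h,g),(h',g')]_t = (g·h'-g'·h, [g,g']+tμ([h,h'])) is isomorphic (for t ≠ 0) to the direct product Lie algebra h⊕g; explicitly, the map id_h + μ is an isomorphism from the deformed algebra of the identity crossed module to the deformed algebra of μ. -/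
/-!
Since `μ` is bijective and `⁅μ a, b⁆ = ⁅a, b⁆`, the map `id × μ` identifies the deformed bracket
of `μ` with that of the identity crossed module, which is `h ⊗ ℂ[ε]/(ε² - t)` written as
`a ε + x`. Choosing `s` with `s² = t ≠ 0`, the ring `ℂ[ε]/(ε² - s²)` splits as `ℂ × ℂ` via
`ε ↦ (s, -s)`, so `(a, x) ↦ (x + s a, x - s a)` turns the deformed bracket into the direct one.
-/

section

variable {h g : Type*} [LieRing h] [LieAlgebra ℂ h] [LieRing g] [LieAlgebra ℂ g]
  [LieRingModule g h] [LieModule ℂ g h]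

/-- The deformed bracket `[(h,g),(h',g')]_t = (g·h' - g'·h, [g,g'] + t μ[h,h'])`. -/
def deformedBracket (μ : h →ₗ⁅ℂ⁆ g) (t : ℂ) (x y : h × g) : h × g :=
  (⁅x.2, y.1⁆ - ⁅y.2, x.1⁆, ⁅x.2, y.2⁆ + t • μ ⁅x.1, y.1⁆)

/-- The deformed bracket of the identity crossed module `id : h → h`
(`h` acting on itself by the adjoint action). -/
def deformedBracketId (t : ℂ) (x y : h × h) : h × h :=
  (⁅x.2, y.1⁆ - ⁅y.2, x.1⁆, ⁅x.2, y.2⁆ + t • ⁅x.1, y.1⁆)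

/-- The direct product bracket on `h ⊕ g`. -/
def directBracket (x y : h × g) : h × g :=
  (⁅x.1, y.1⁆, ⁅x.2, y.2⁆)

end

section

variable {K M : Type*} [Field K] [NeZero (2 : K)] [AddCommGroup M] [Module K M]

noncomputable def splitEquiv (s : K) (hs : s ≠ 0) : (M × M) ≃ₗ[K] (M × M) where
  toFun p := (p.2 + s • p.1, p.2 - s • p.1)
  invFun p := ((2 * s)⁻¹ • (p.1 - p.2), (2 : K)⁻¹ • (p.1 + p.2))
  map_add' p q := by ext <;> simp only [Prod.fst_add, Prod.snd_add, smul_add] <;> abel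
  map_smul' c p := by ext <;> simp only [Prod.smul_fst, Prod.smul_snd, RingHom.id_apply] <;> module
  left_inv p := by ext <;> simp only <;> match_scalars <;> field_simp <;> ring
  right_inv p := by ext <;> simp only <;> match_scalars <;> field_simp <;> ring

theorem splitEquiv_apply (s : K) (hs : s ≠ 0) (p : M × M) :
    splitEquiv s hs p = (p.2 + s • p.1, p.2 - s • p.1) :=
  rfl

end

section

variable {h g : Type*} [LieRing h] [LieAlgebra ℂ h] [LieRing g] [LieAlgebra ℂ g]

theorem splitEquiv_deformedBracketId {s t : ℂ} (hs : s ≠ 0) (hst : s ^ 2 = t) (x y : h × h) :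
    splitEquiv s hs (deformedBracketId t x y) =
      directBracket (splitEquiv s hs x) (splitEquiv s hs y) := by
  simp only [splitEquiv_apply, deformedBracketId, directBracket, ← hst, add_lie, sub_lie, lie_add,
    lie_sub, lie_smul, smul_lie, ← lie_skew x.1 y.2]
  ext <;> module

theorem prodMap_directBracket (μ : h →ₗ⁅ℂ⁆ g) (x y : h × h) :
    ((directBracket x y).1, μ (directBracket x y).2) =
      directBracket (x.1, μ x.2) (y.1, μ y.2) := by
  simp [directBracket]

variable [LieRingModule g h]

theorem prodMap_deformedBracketId (μ : h →ₗ⁅ℂ⁆ g) (hcm2 : ∀ a b : h, ⁅μ a, b⁆ = ⁅a, b⁆) (t : ℂ)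
    (x y : h × h) :
    ((deformedBracketId t x y).1, μ (deformedBracketId t x y).2) =
      deformedBracket μ t (x.1, μ x.2) (y.1, μ y.2) := by
  simp [deformedBracketId, deformedBracket, hcm2]

end

section

variable {h g : Type*} [LieRing h] [LieAlgebra ℂ h] [LieRing g] [LieAlgebra ℂ g]
  [LieRingModule g h] [LieModule ℂ g h]

theorem deformed_iso_direct_of_mu_iso_general (μ : h →ₗ⁅ℂ⁆ g)
    (hcm2 : ∀ a b : h, ⁅μ a, b⁆ = ⁅a, b⁆)
    (hbij : Function.Bijective μ) (t : ℂ) (ht : t ≠ 0) :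
    (∃ Ψ : (h × g) ≃ₗ[ℂ] (h × g),
        ∀ x y : h × g, Ψ (deformedBracket μ t x y) = directBracket (Ψ x) (Ψ y)) ∧
    (Function.Bijective (fun p : h × h => ((p.1, μ p.2) : h × g)) ∧
      ∀ x y : h × h,
        ((deformedBracketId t x y).1, μ (deformedBracketId t x y).2) =
          deformedBracket μ t (x.1, μ x.2) (y.1, μ y.2)) := by
  obtain ⟨s, hst⟩ := IsAlgClosed.exists_pow_nat_eq t two_pos
  have hs : s ≠ 0 := by rintro rfl; exact ht (by simp [← hst])
  let E : (h × h) ≃ₗ[ℂ] (h × g) :=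
    (LinearEquiv.refl ℂ h).prodCongr (LinearEquiv.ofBijective μ.toLinearMap hbij)
  have hE (p : h × h) : E p = (p.1, μ p.2) := rfl
  refine ⟨⟨E.symm ≪≫ₗ splitEquiv s hs ≪≫ₗ E, fun x y => ?_⟩,
    Function.bijective_id.prodMap hbij, prodMap_deformedBracketId μ hcm2 t⟩
  obtain ⟨x, rfl⟩ := E.surjective x
  obtain ⟨y, rfl⟩ := E.surjective y
  simp only [LinearEquiv.trans_apply, LinearEquiv.symm_apply_apply]
  rw [hE x, hE y, ← prodMap_deformedBracketId μ hcm2, ← hE, LinearEquiv.symm_apply_apply,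
    splitEquiv_deformedBracketId hs hst, hE, hE, hE, prodMap_directBracket]

/-- if `μ` is an isomorphism of Lie algebras, the deformed Lie
algebra `(h ⊕ g, [·,·]_t)` with `t ≠ 0` is isomorphic to the direct product
Lie algebra `h ⊕ g`; explicitly, `id_h + μ` is an isomorphism from the deformed
algebra of the identity crossed module to the deformed algebra of `μ`. -/
theorem deformed_iso_direct_of_mu_iso (μ : h →ₗ⁅ℂ⁆ g)
    (hder : ∀ (x : g) (a b : h), ⁅x, ⁅a, b⁆⁆ = ⁅⁅x, a⁆, b⁆ + ⁅a, ⁅x, b⁆⁆)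
    (hcm1 : ∀ (x : g) (a : h), μ ⁅x, a⁆ = ⁅x, μ a⁆)
    (hcm2 : ∀ a b : h, ⁅μ a, b⁆ = ⁅a, b⁆)
    (hbij : Function.Bijective μ) (t : ℂ) (ht : t ≠ 0) :
    (∃ Ψ : (h × g) ≃ₗ[ℂ] (h × g),
        ∀ x y : h × g, Ψ (deformedBracket μ t x y) = directBracket (Ψ x) (Ψ y)) ∧
    (Function.Bijective (fun p : h × h => ((p.1, μ p.2) : h × g)) ∧
      ∀ x y : h × h,
        ((deformedBracketId t x y).1, μ (deformedBracketId t x y).2) =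
          deformedBracket μ t (x.1, μ x.2) (y.1, μ y.2)) :=
  deformed_iso_direct_of_mu_iso_general μ hcm2 hbij t ht

end
end
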